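/- For every n ∈ ℕ: τ_n(e_j) = e_j for all j ≤ pos(a_n,0)−1, and τ_n(e_j) = −A_{N_n,a_n}·T^{j−pos(a_n,0)} e_0 for all pos(a_n,0) ≤ j ≤ pos(Δ_{n+1},0)−1. -/

import Mathlib

open scoped Classical in
/-- The function `Next` from Definition 4.1, defined from the sequence `(b_n)`. -/
noncomputable def nextFn (b : ℕ → ℕ) : ℕ × ℕ → ℕ × ℕ :=
  fun p =>
    if (∃ n : ℕ, 1 ≤ n ∧ p.1 = b n ∧ Even p.2 ∧ p.2 < 2 * n) ∨
       (∃ n : ℕ, 1 ≤ n ∧ p.1 = 2 * b n + 1 ∧ Odd p.2 ∧ 0 < p.2 ∧ p.2 ≤ 2 * n) ∨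
       (p.1 = 0 ∧ Odd p.2) then
      (p.1, p.2 + 1)
    else if (∃ n : ℕ, 1 ≤ n ∧ p.1 = b n + 1 ∧ Odd p.2 ∧ p.2 < 2 * n) ∨
        (∃ n : ℕ, 1 ≤ n ∧ p.1 = 2 * b n ∧ Even p.2 ∧ 0 < p.2 ∧ p.2 ≤ 2 * n) then
      (p.1, p.2 - 1)
    else if Even p.2 then (p.1 + 1, p.2)
    else (p.1 - 1, p.2)

/-- `enum k = Next^k (0, 0)`, the `k`-th element of the ordering of `ℕ × ℕ` defined by `Next`. -/
noncomputable def enum (b : ℕ → ℕ) (k : ℕ) : ℕ × ℕ := (nextFn b)^[k] (0, 0)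

/-- The basis vector `e_k = e_{n,m}` where `pos (n, m) = k`, in `s₀,₀^ℕ = ℕ × ℕ →₀ ℝ`. -/
noncomputable def eVec (b : ℕ → ℕ) (k : ℕ) : ℕ × ℕ →₀ ℝ := Finsupp.single (enum b k) 1

/-- `|(x_{i,j})_i|_N = Σ_i |x_{i,j}| A_{N,i}`, the `N`-th seminorm of the `j`-th column. -/
noncomputable def colNorm (A : ℕ → ℕ → ℝ) (N : ℕ) (x : ℕ × ℕ → ℝ) (j : ℕ) : ℝ :=
  ∑' i : ℕ, |x (i, j)| * A N i

/-- `‖x‖_N = Σ_{j ≤ N} |(x_{i,j})_i|_N`, the seminorms of `s^ℕ`. -/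
noncomputable def normK (A : ℕ → ℕ → ℝ) (N : ℕ) (x : ℕ × ℕ → ℝ) : ℝ :=
  ∑ j ∈ Finset.range (N + 1), colNorm A N x j

/-- `|||x|||_N = Σ_j |(x_{i,j})_i|_N`, the norms of `s₀^ℕ`. -/
noncomputable def norm3 (A : ℕ → ℕ → ℝ) (N : ℕ) (x : ℕ × ℕ → ℝ) : ℝ :=
  ∑' j : ℕ, colNorm A N x j

/-
Write `P n = pos (Δ n, 0)` and `Q n = pos (a n, 0)`. No `b_k` lies in `[a n, Δ (n + 1))`, so `Next`
walks along column `0` from `(a n, 0)` to `(Δ (n + 1), 0)` and `P (n + 1) = Q n + P n`: the indices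
split into blocks `[P n, Q n) ∪ [Q n, P (n + 1))`. By induction over the blocks, `T^j e₀ = α_j e_j`
on the first half and `T^j e₀ = A⁻¹ e_j + T^(j - Q n) e₀` on the second, where `e₀` is fed back at
`Q n - 1` and the last step of the block restores `T^(P (n + 1)) e₀ = α e_{P (n + 1)}`. Inverting
these triangular relations puts `e_j` in the span of the `T^i e₀`, `i ≤ j`, and gives
`e_j = A (T^j e₀ - T^(j - Q n) e₀)` on the second half, while `τ_n` fixes `T^i e₀` for `i < Q n` and
kills it for `Q n ≤ i < P (n + 1)`.
-/

theorem nextFn_fst_le (b : ℕ → ℕ) (p : ℕ × ℕ) : (nextFn b p).1 ≤ p.1 + 1 := by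
  unfold nextFn
  split_ifs <;> simp only <;> omega

theorem enum_fst_le (b : ℕ → ℕ) (k : ℕ) : (enum b k).1 ≤ k := by
  induction k with
  | zero => simp [enum]
  | succ k ih =>
    rw [enum, Function.iterate_succ_apply']
    exact (nextFn_fst_le b _).trans (by simpa [enum] using ih)

theorem nextFn_column_zero (b : ℕ → ℕ) {m : ℕ} (hm : ∀ k, 1 ≤ k → b k ≠ m) :
    nextFn b (m, 0) = (m + 1, 0) := by
  unfold nextFn
  split_ifs <;> grind

theorem iterate_nextFn_column_zero (b : ℕ → ℕ) {m t : ℕ}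
    (hb : ∀ k, 1 ≤ k → b k ∉ Set.Ico m (m + t)) :
    (nextFn b)^[t] (m, 0) = (m + t, 0) := by
  induction t with
  | zero => rfl
  | succ t ih =>
    rw [Function.iterate_succ_apply',
      ih fun k hk h => hb k hk (Set.Ico_subset_Ico_right (by omega) h),
      nextFn_column_zero b fun k hk h => hb k hk (by simp [h])]
    rfl

section Position

variable {b : ℕ → ℕ} {pos : ℕ × ℕ → ℕ}

theorem enum_pos (hpos : ∀ p k, pos p = k ↔ enum b k = p) (p : ℕ × ℕ) : enum b (pos p) = p :=
  (hpos p _).mp rfl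

theorem le_pos_column_zero (hpos : ∀ p k, pos p = k ↔ enum b k = p) (m : ℕ) : m ≤ pos (m, 0) := by
  simpa [enum_pos hpos] using enum_fst_le b (pos (m, 0))

theorem pos_column_zero_add (hpos : ∀ p k, pos p = k ↔ enum b k = p) {m t : ℕ}
    (hb : ∀ k, 1 ≤ k → b k ∉ Set.Ico m (m + t)) : pos (m + t, 0) = pos (m, 0) + t := by
  rw [hpos, enum, Nat.add_comm, Function.iterate_add_apply, ← enum, enum_pos hpos,
    iterate_nextFn_column_zero b hb]

theorem pos_one_column_zero (hpos : ∀ p k, pos p = k ↔ enum b k = p) (hb : ∀ k, 1 ≤ k → 0 < b k) :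
    pos (1, 0) = 1 := by
  change pos (0 + 1, 0) = 0 + 1
  rw [pos_column_zero_add hpos fun k hk h => (hb k hk).ne' (by simpa using h),
    (hpos (0, 0) 0).mpr rfl]

theorem pos_succ_of_interleave {Δ a : ℕ → ℕ} (hpos : ∀ p k, pos p = k ↔ enum b k = p)
    (hΔa : ∀ n, Δ n < a n ∧ a n < Δ (n + 1)) (hb : ∀ k, 1 ≤ k → Δ k < b k ∧ b k < a k)
    (hΔ : ∀ n, Δ (n + 1) = a n + pos (Δ n, 0)) (n : ℕ) :
    pos (Δ (n + 1), 0) = pos (a n, 0) + pos (Δ n, 0) := by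
  have hΔmono : StrictMono Δ := strictMono_nat_of_lt_succ fun n => (hΔa n).1.trans (hΔa n).2
  have hamono : StrictMono a := strictMono_nat_of_lt_succ fun n => (hΔa n).2.trans (hΔa (n + 1)).1
  rw [hΔ n]
  refine pos_column_zero_add hpos fun k hk ⟨hak, hkΔ⟩ => ?_
  rw [← hΔ n] at hkΔ
  rcases le_or_gt k n with hkn | hnk
  · exact absurd ((hb k hk).2.trans_le (hamono.monotone hkn)) hak.not_gt
  · exact absurd ((hΔmono.monotone hnk).trans_lt (hb k hk).1) hkΔ.not_gt

end Position

theorem exists_mem_Ico_of_strictMono {P : ℕ → ℕ} (hP : StrictMono P) {j : ℕ} (hj : P 0 ≤ j) :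
    ∃ m, P m ≤ j ∧ j < P (m + 1) := by
  induction j, hj using Nat.le_induction with
  | base => exact ⟨0, le_rfl, hP (Nat.lt_succ_self 0)⟩
  | succ j hj ih =>
    obtain ⟨m, hmj, hjm⟩ := ih
    rcases (show j + 1 ≤ P (m + 1) from hjm).eq_or_lt with h | h
    · exact ⟨m + 1, h.ge, h ▸ hP (Nat.lt_succ_self _)⟩
    · exact ⟨m, by omega, h⟩

theorem piecewise_geometric_pos {α : ℕ → ℝ} {P S Q : ℕ → ℕ} {c d : ℕ → ℝ} (hc : ∀ n, 0 < c n)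
    (hd : ∀ n, 0 < d n) (hPS : ∀ n, 1 ≤ n → P n < S n)
    (hα0 : ∀ j, P 0 ≤ j → j < Q 0 → α j = 2 ^ (j - P 0) / c 0)
    (hα1 : ∀ n j, 1 ≤ n → P n ≤ j → j < S n →
      α j = (1 / c n) * ((2 * d (n - 1)) ^ (j - P n))⁻¹)
    (hα2 : ∀ n j, 1 ≤ n → S n ≤ j → j < Q n → α j = α (S n - 1) * 2 ^ (j - S n))
    {n j : ℕ} (hPj : P n ≤ j) (hjQ : j < Q n) : 0 < α j := by
  have hpos_first : ∀ n j, 1 ≤ n → P n ≤ j → j < S n → 0 < α j := fun n j hn h1 h2 => by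
    have := hc n
    have := hd (n - 1)
    rw [hα1 n j hn h1 h2]
    positivity
  rcases n.eq_zero_or_pos with rfl | hn
  · have := hc 0
    rw [hα0 j hPj hjQ]
    positivity
  rcases lt_or_ge j (S n) with hjS | hSj
  · exact hpos_first n j hn hPj hjS
  · have := hPS n hn
    rw [hα2 n j hn hSj hjQ]
    exact mul_pos (hpos_first n _ hn (by omega) (by omega)) (by positivity)

theorem Module.End.pow_succ_apply {R M : Type*} [Semiring R] [AddCommMonoid M] [Module R M]
    (T : Module.End R M) (k : ℕ) (x : M) : (T ^ (k + 1)) x = T ((T ^ k) x) := by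
  rw [pow_succ', Module.End.mul_apply]

theorem Module.End.pow_apply_of_pos {R M : Type*} [Semiring R] [AddCommMonoid M] [Module R M]
    (T : Module.End R M) {k : ℕ} (hk : 0 < k) (x : M) : (T ^ k) x = T ((T ^ (k - 1)) x) := by
  rw [← Module.End.pow_succ_apply, Nat.sub_add_cancel hk]

section Orbit

variable {K V : Type*} [Field K] [AddCommGroup V] [Module K V]

theorem eq_smul_sub_of_eq_inv_smul_add {c : K} (hc : c ≠ 0) {x y z : V} (h : y = c⁻¹ • x + z) :
    x = c • (y - z) := by
  rw [h, add_sub_cancel_right, smul_inv_smul₀ hc]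

theorem apply_eq_ite_of_map_sum {τ : Module.End K V} {v : ℕ → V} {L M k : ℕ}
    (hτ : ∀ y : ℕ → K, τ (∑ j ∈ Finset.range M, y j • v j) = ∑ j ∈ Finset.range L, y j • v j)
    (hk : k < M) : τ (v k) = if k < L then v k else 0 := by
  simpa [Pi.single_apply, hk] using hτ (Pi.single k 1)

variable {T : Module.End K V} {e : ℕ → V} {α : ℕ → K}

theorem pow_apply_eq_smul_of_scaled_shift {x : V} {p q : ℕ}
    (hα : ∀ j, p ≤ j → j < q → α j ≠ 0)
    (hT : ∀ j, p ≤ j → j + 1 < q → T (e j) = (α (j + 1) / α j) • e (j + 1))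
    (hp : (T ^ p) x = α p • e p) {j : ℕ} (hpj : p ≤ j) (hjq : j < q) :
    (T ^ j) x = α j • e j := by
  induction j, hpj using Nat.le_induction with
  | base => exact hp
  | succ j hpj ih =>
    rw [T.pow_succ_apply, ih (by omega), map_smul, hT j hpj hjq, smul_smul,
      mul_div_cancel₀ _ (hα j hpj (by omega))]

theorem pow_apply_eq_add_of_shift {x : V} {c : K} {q r : ℕ}
    (hT : ∀ j, q ≤ j → j + 1 < r → T (e j) = e (j + 1))
    (hq : (T ^ q) x = c • e q + x) {j : ℕ} (hqj : q ≤ j) (hjr : j < r) :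
    (T ^ j) x = c • e j + (T ^ (j - q)) x := by
  induction j, hqj using Nat.le_induction with
  | base => simpa using hq
  | succ j hqj ih =>
    rw [T.pow_succ_apply, ih (by omega), map_add, map_smul, hT j hqj hjr, Nat.sub_add_comm hqj,
      T.pow_succ_apply]

theorem pow_apply_eq_of_blocks {P Q : ℕ → ℕ} {w : ℕ → K}
    (hP0 : P 0 = 1) (hPQ : ∀ n, P n < Q n) (hPsucc : ∀ n, P (n + 1) = Q n + P n)
    (hα : ∀ n j, P n ≤ j → j < Q n → α j ≠ 0) (hw : ∀ n, w n ≠ 0)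
    (hT0 : T (e 0) = α 1 • e 1)
    (hTa : ∀ n j, P n ≤ j → j + 1 < Q n → T (e j) = (α (j + 1) / α j) • e (j + 1))
    (hTb : ∀ n, T (e (Q n - 1)) = (α (Q n - 1))⁻¹ • ((w n)⁻¹ • e (Q n) + e 0))
    (hTc : ∀ n j, Q n ≤ j → j + 1 < P (n + 1) → T (e j) = e (j + 1))
    (hTd : ∀ n, T (e (P (n + 1) - 1)) =
      (w n * α (P (n + 1))) • e (P (n + 1)) - (w n * α (P n)) • e (P n))
    (n : ℕ) :
    (∀ j, P n ≤ j → j < Q n → (T ^ j) (e 0) = α j • e j) ∧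
    (∀ j, Q n ≤ j → j < P (n + 1) → (T ^ j) (e 0) = (w n)⁻¹ • e j + (T ^ (j - Q n)) (e 0)) := by
  have hP1 : ∀ n, 1 ≤ P n := fun n => by
    induction n with
    | zero => exact hP0.ge
    | succ n ih => rw [hPsucc]; omega
  have halves : ∀ n, (T ^ P n) (e 0) = α (P n) • e (P n) →
      (∀ j, P n ≤ j → j < Q n → (T ^ j) (e 0) = α j • e j) ∧
      (∀ j, Q n ≤ j → j < P (n + 1) →
        (T ^ j) (e 0) = (w n)⁻¹ • e j + (T ^ (j - Q n)) (e 0)) := by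
    intro n hstart
    have first := fun j => pow_apply_eq_smul_of_scaled_shift (hα n) (hTa n) hstart (j := j)
    refine ⟨first, fun j => pow_apply_eq_add_of_shift (hTc n) ?_⟩
    have hQ := hPQ n
    have hP := hP1 n
    have hlast : P n ≤ Q n - 1 := by omega
    rw [T.pow_apply_of_pos (by omega), first _ hlast (by omega), map_smul, hTb n, smul_smul,
      mul_inv_cancel₀ (hα n _ hlast (by omega)), one_smul]
  have hstart : ∀ n, (T ^ P n) (e 0) = α (P n) • e (P n) := by
    intro n
    induction n with
    | zero => rw [hP0, pow_one, hT0]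
    | succ n ih =>
      have hQ := hPQ n
      have hP := hP1 n
      have hPn := hPsucc n
      rw [T.pow_apply_of_pos (by omega), (halves n ih).2 _ (by omega) (by omega), map_add,
        map_smul, hTd n, show P (n + 1) - 1 - Q n = P n - 1 by omega,
        ← T.pow_apply_of_pos (by omega), ih, smul_sub, smul_smul, smul_smul,
        inv_mul_cancel_left₀ (hw n), inv_mul_cancel_left₀ (hw n), sub_add_cancel]
  exact halves n (hstart n)

theorem mem_span_pow_apply_Iic {P Q : ℕ → ℕ} {w : ℕ → K} (hP0 : P 0 = 1) (hP : StrictMono P)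
    (hα : ∀ n j, P n ≤ j → j < Q n → α j ≠ 0) (hw : ∀ n, w n ≠ 0)
    (horbit : ∀ n, (∀ j, P n ≤ j → j < Q n → (T ^ j) (e 0) = α j • e j) ∧
      (∀ j, Q n ≤ j → j < P (n + 1) → (T ^ j) (e 0) = (w n)⁻¹ • e j + (T ^ (j - Q n)) (e 0)))
    (j : ℕ) : e j ∈ Submodule.span K ((fun i => (T ^ i) (e 0)) '' Set.Iic j) := by
  have mem : ∀ i ≤ j, (T ^ i) (e 0) ∈ Submodule.span K ((fun i => (T ^ i) (e 0)) '' Set.Iic j) :=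
    fun i hi => Submodule.subset_span ⟨i, hi, rfl⟩
  rcases j.eq_zero_or_pos with rfl | hj
  · simpa using mem 0 le_rfl
  obtain ⟨m, hmj, hjm⟩ := exists_mem_Ico_of_strictMono hP (hP0.trans_le hj)
  rcases lt_or_ge j (Q m) with hjQ | hQj
  · rw [(eq_inv_smul_iff₀ (hα m j hmj hjQ)).mpr ((horbit m).1 j hmj hjQ).symm]
    exact Submodule.smul_mem _ _ (mem j le_rfl)
  · rw [eq_smul_sub_of_eq_inv_smul_add (hw m) ((horbit m).2 j hQj hjm)]
    exact Submodule.smul_mem _ _ (Submodule.sub_mem _ (mem j le_rfl) (mem _ (Nat.sub_le _ _)))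

theorem apply_eq_of_blocks {τ : Module.End K V} {P Q : ℕ → ℕ} {w : ℕ → K}
    (hP0 : P 0 = 1) (hPQ : ∀ n, P n < Q n) (hPsucc : ∀ n, P (n + 1) = Q n + P n)
    (hα : ∀ n j, P n ≤ j → j < Q n → α j ≠ 0) (hw : ∀ n, w n ≠ 0)
    (horbit : ∀ n, (∀ j, P n ≤ j → j < Q n → (T ^ j) (e 0) = α j • e j) ∧
      (∀ j, Q n ≤ j → j < P (n + 1) → (T ^ j) (e 0) = (w n)⁻¹ • e j + (T ^ (j - Q n)) (e 0)))
    {n : ℕ} (hτ : ∀ y : ℕ → K, τ (∑ j ∈ Finset.range (P (n + 1)), y j • (T ^ j) (e 0)) =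
      ∑ j ∈ Finset.range (Q n), y j • (T ^ j) (e 0)) :
    (∀ j, j < Q n → τ (e j) = e j) ∧
    (∀ j, Q n ≤ j → j < P (n + 1) → τ (e j) = -(w n) • (T ^ (j - Q n)) (e 0)) := by
  have hP : StrictMono P :=
    strictMono_nat_of_lt_succ fun n => by have := hPQ n; have := hPsucc n; omega
  have hP1 : 1 ≤ P n := hP0 ▸ hP.monotone (Nat.zero_le n)
  have := hPQ n
  have := hPsucc n
  have hτT : ∀ i < P (n + 1), τ ((T ^ i) (e 0)) = if i < Q n then (T ^ i) (e 0) else 0 :=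
    fun i hi => apply_eq_ite_of_map_sum hτ hi
  refine ⟨fun j hj => ?_, fun j hQj hjP => ?_⟩
  · have hfix : Set.EqOn τ (LinearMap.id (R := K))
        ((fun i => (T ^ i) (e 0)) '' Set.Iio (Q n)) := by
      rintro _ ⟨i, hi : i < Q n, rfl⟩
      simp [hτT i (by omega), hi]
    exact LinearMap.eqOn_span' hfix <| Submodule.span_mono
      (Set.image_mono (Set.Iic_subset_Iio.mpr hj)) (mem_span_pow_apply_Iic hP0 hP hα hw horbit j)
  · rw [eq_smul_sub_of_eq_inv_smul_add (hw n) ((horbit n).2 j hQj hjP), map_smul, map_sub,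
      hτT j hjP, hτT _ (by omega), if_neg (by omega), if_pos (by omega), zero_sub, smul_neg,
      neg_smul]

end Orbit

theorem tau_values_general
    (A : ℕ → ℕ → ℝ) (b : ℕ → ℕ) (pos : ℕ × ℕ → ℕ)
    (Nn a s : ℕ → ℕ) (D : ℕ → ℝ) (Δ : ℕ → ℕ) (α : ℕ → ℝ)
    (T : (ℕ × ℕ →₀ ℝ) →ₗ[ℝ] (ℕ × ℕ →₀ ℝ))
    (τ : ℕ → (ℕ × ℕ →₀ ℝ) →ₗ[ℝ] (ℕ × ℕ →₀ ℝ))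
    (hA1 : ∀ N j, 1 ≤ A N j)
    (hpos : ∀ p k, pos p = k ↔ (nextFn b)^[k] (0, 0) = p)
    (hD : ∀ n, 1 ≤ D n)
    (hΔ0 : Δ 0 = 1)
    (hΔ : ∀ n, Δ (n + 1) = a n + pos (Δ n, 0))
    (hord0 : Δ 0 < a 0 ∧ a 0 < Δ 1)
    (hord : ∀ n, 1 ≤ n → Δ n < b n ∧ 2 * b n < s n ∧ s n < a n ∧ a n < Δ (n + 1))
    (hbΔ : ∀ n, 1 ≤ n → 2 * pos (Δ n, 0) ≤ b n)
    (hα0 : ∀ j, pos (Δ 0, 0) ≤ j → j < pos (a 0, 0) →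
      α j = (2 : ℝ) ^ (j - pos (Δ 0, 0)) / A (Nn 0) (a 0))
    (hα1 : ∀ n j, 1 ≤ n → pos (Δ n, 0) ≤ j → j < pos (s n, 0) →
      α j = (1 / A (Nn n) (a n)) * ((2 * D (n - 1)) ^ (j - pos (Δ n, 0)))⁻¹)
    (hα2 : ∀ n j, 1 ≤ n → pos (s n, 0) ≤ j → j < pos (a n, 0) →
      α j = α (pos (s n, 0) - 1) * 2 ^ (j - pos (s n, 0)))
    (hT0 : T (eVec b 0) = α 1 • eVec b 1)
    (hTa : ∀ n j, pos (Δ n, 0) ≤ j → j + 1 < pos (a n, 0) →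
      T (eVec b j) = (α (j + 1) / α j) • eVec b (j + 1))
    (hTb : ∀ n : ℕ, T (eVec b (pos (a n, 0) - 1)) =
      (α (pos (a n, 0) - 1))⁻¹ • ((A (Nn n) (a n))⁻¹ • eVec b (pos (a n, 0)) + eVec b 0))
    (hTc : ∀ n j, pos (a n, 0) ≤ j → j + 1 < pos (Δ (n + 1), 0) →
      T (eVec b j) = eVec b (j + 1))
    (hTd : ∀ n : ℕ, T (eVec b (pos (Δ (n + 1), 0) - 1)) =
      (A (Nn n) (a n) * α (pos (Δ (n + 1), 0))) • eVec b (pos (Δ (n + 1), 0)) -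
        (A (Nn n) (a n) * α (pos (Δ n, 0))) • eVec b (pos (Δ n, 0)))
    (hτ : ∀ (n : ℕ) (y : ℕ → ℝ),
      τ n (∑ j ∈ Finset.range (pos (Δ (n + 1), 0)), y j • (T ^ j) (eVec b 0)) =
        ∑ j ∈ Finset.range (pos (a n, 0)), y j • (T ^ j) (eVec b 0))
    :
    ∀ n : ℕ,
      (∀ j, j < pos (a n, 0) → τ n (eVec b j) = eVec b j) ∧
      (∀ j, pos (a n, 0) ≤ j → j < pos (Δ (n + 1), 0) →
        τ n (eVec b j) = -(A (Nn n) (a n)) • (T ^ (j - pos (a n, 0))) (eVec b 0)) := by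
  have hΔa : ∀ n, Δ n < a n ∧ a n < Δ (n + 1) := fun n => by
    rcases n.eq_zero_or_pos with rfl | hn
    · exact hord0
    · have := hord n hn; omega
  have hb : ∀ k, 1 ≤ k → Δ k < b k ∧ b k < a k := fun k hk => by have := hord k hk; omega
  have hP0 : pos (Δ 0, 0) = 1 :=
    hΔ0 ▸ pos_one_column_zero hpos fun k hk => Nat.zero_lt_of_lt (hb k hk).1
  have hPsucc := pos_succ_of_interleave hpos hΔa hb hΔ
  have hPQ : ∀ n, pos (Δ n, 0) < pos (a n, 0) := fun n => by
    have := le_pos_column_zero hpos (a n)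
    rcases n.eq_zero_or_pos with rfl | hn
    · have := hΔa 0; omega
    · have := hbΔ n hn; have := hb n hn; omega
  have hA : ∀ n, 0 < A (Nn n) (a n) := fun n => one_pos.trans_le (hA1 _ _)
  have hα : ∀ n j, pos (Δ n, 0) ≤ j → j < pos (a n, 0) → α j ≠ 0 := fun n j hPj hjQ =>
    (piecewise_geometric_pos hA (fun n => one_pos.trans_le (hD n)) (fun n hn => by
      have := hbΔ n hn; have := hord n hn; have := le_pos_column_zero hpos (s n); omega)
      hα0 hα1 hα2 hPj hjQ).ne'
  have hw : ∀ n, A (Nn n) (a n) ≠ 0 := fun n => (hA n).ne'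
  have horbit := pow_apply_eq_of_blocks hP0 hPQ hPsucc hα hw hT0 hTa hTb hTc hTd
  exact fun n => apply_eq_of_blocks hP0 hPQ hPsucc hα hw horbit (hτ n)

/-- The projection `τ_n` satisfies `τ_n e_j = e_j` for `j ≤ pos(a_n,0) - 1` and `τ_n e_j = -A_{N_n,a_n} T^{j-pos(a_n,0)} e₀` for `pos(a_n,0) ≤ j ≤ pos(Δ_{n+1},0) - 1`. -/
theorem tau_values
    (A : ℕ → ℕ → ℝ) (b : ℕ → ℕ) (pos : ℕ × ℕ → ℕ)
    (Nn a s : ℕ → ℕ) (D : ℕ → ℝ) (Δ : ℕ → ℕ) (α : ℕ → ℝ)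
    (T : (ℕ × ℕ →₀ ℝ) →ₗ[ℝ] (ℕ × ℕ →₀ ℝ))
    (τ : ℕ → (ℕ × ℕ →₀ ℝ) →ₗ[ℝ] (ℕ × ℕ →₀ ℝ))
    (hA1 : ∀ N j, 1 ≤ A N j)
    (hA2m : ∀ j, Monotone fun N => A N j)
    (hA2u : ∀ j, ¬ BddAbove (Set.range fun N => A N j))
    (hA3m : ∀ N, Monotone fun j => A N j)
    (hA3u : ∀ N, ¬ BddAbove (Set.range fun j => A N j))
    (hA4 : ∀ N j, A N (j + 1) ≤ 2 * A N j)
    (hA5 : ∀ N, Filter.Tendsto (fun j => A N j / A (N + 1) j) Filter.atTop (nhds 0))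
    (hA6 : ∀ N, Filter.Tendsto (fun j => (2 : ℝ) ^ j / A N j) Filter.atTop Filter.atTop)
    (hbpos : ∀ n, 1 ≤ n → 0 < b n)
    (hbmono : ∀ n, 1 ≤ n → b n < b (n + 1))
    (hbgap : ∀ n, 1 ≤ n → 2 * b n + 1 < b (n + 1))
    (hpos : ∀ p k, pos p = k ↔ (nextFn b)^[k] (0, 0) = p)
    (hNle : ∀ n, Nn n ≤ n)
    (hNinf : ∀ N m, ∃ n, m ≤ n ∧ Nn n = N)
    (hD : ∀ n, 1 ≤ D n)
    (hΔ0 : Δ 0 = 1)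
    (hΔ : ∀ n, Δ (n + 1) = a n + pos (Δ n, 0))
    (hord0 : Δ 0 < a 0 ∧ a 0 < Δ 1)
    (hord : ∀ n, 1 ≤ n → Δ n < b n ∧ 2 * b n < s n ∧ s n < a n ∧ a n < Δ (n + 1))
    (hbΔ : ∀ n, 1 ≤ n → 2 * pos (Δ n, 0) ≤ b n)
    (hc2bn : ∀ n k, 1 ≤ n → b n ≤ k →
      (4 : ℝ) ^ pos (Δ n, 0) * A (Nn (n - 1) + 1) k ≤ A (Nn (n - 1) + 2) k / D (n - 1))
    (hc1 : ∀ n, 1 ≤ n →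
      A (Nn n) (a n) * (2 * D (n - 1)) ^ (pos (s n, 0) - pos (Δ n, 0) - 1) ≤
        (2 : ℝ) ^ (pos (a n, 0) - pos (s n, 0) - 1))
    (hc2 : ∀ n, 1 ≤ n → A (Nn (n - 1)) (a (n - 1)) ≤ A (Nn n) (a n))
    (hc4 : ∀ n, 1 ≤ n → D (n - 1) * A (Nn (n - 1)) (b n) ≤ A (Nn n) (a n))
    (hc3 : ∀ n, A (Nn n) (a n) * 4 ^ pos (Δ n, 0) * A 0 0 ≤ A (Nn n + 1) (a n))
    (hc1' : A (Nn 0) (a 0) ≤ (2 : ℝ) ^ (pos (a 0, 0) - pos (Δ 0, 0) - 1))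
    (hα0 : ∀ j, pos (Δ 0, 0) ≤ j → j < pos (a 0, 0) →
      α j = (2 : ℝ) ^ (j - pos (Δ 0, 0)) / A (Nn 0) (a 0))
    (hα1 : ∀ n j, 1 ≤ n → pos (Δ n, 0) ≤ j → j < pos (s n, 0) →
      α j = (1 / A (Nn n) (a n)) * ((2 * D (n - 1)) ^ (j - pos (Δ n, 0)))⁻¹)
    (hα2 : ∀ n j, 1 ≤ n → pos (s n, 0) ≤ j → j < pos (a n, 0) →
      α j = α (pos (s n, 0) - 1) * 2 ^ (j - pos (s n, 0)))
    (hT0 : T (eVec b 0) = α 1 • eVec b 1)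
    (hTa : ∀ n j, pos (Δ n, 0) ≤ j → j + 1 < pos (a n, 0) →
      T (eVec b j) = (α (j + 1) / α j) • eVec b (j + 1))
    (hTb : ∀ n : ℕ, T (eVec b (pos (a n, 0) - 1)) =
      (α (pos (a n, 0) - 1))⁻¹ • ((A (Nn n) (a n))⁻¹ • eVec b (pos (a n, 0)) + eVec b 0))
    (hTc : ∀ n j, pos (a n, 0) ≤ j → j + 1 < pos (Δ (n + 1), 0) →
      T (eVec b j) = eVec b (j + 1))
    (hTd : ∀ n : ℕ, T (eVec b (pos (Δ (n + 1), 0) - 1)) =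
      (A (Nn n) (a n) * α (pos (Δ (n + 1), 0))) • eVec b (pos (Δ (n + 1), 0)) -
        (A (Nn n) (a n) * α (pos (Δ n, 0))) • eVec b (pos (Δ n, 0)))
    (hτ : ∀ (n : ℕ) (y : ℕ → ℝ),
      τ n (∑ j ∈ Finset.range (pos (Δ (n + 1), 0)), y j • (T ^ j) (eVec b 0)) =
        ∑ j ∈ Finset.range (pos (a n, 0)), y j • (T ^ j) (eVec b 0))
    :
    ∀ n : ℕ,
      (∀ j, j < pos (a n, 0) → τ n (eVec b j) = eVec b j) ∧
      (∀ j, pos (a n, 0) ≤ j → j < pos (Δ (n + 1), 0) →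
        τ n (eVec b j) = -(A (Nn n) (a n)) • (T ^ (j - pos (a n, 0))) (eVec b 0)) :=
  tau_values_general A b pos Nn a s D Δ α T τ hA1 hpos hD hΔ0 hΔ hord0 hord hbΔ hα0 hα1 hα2 hT0 hTa
    hTb hTc hTd hτ
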